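/- arXiv:2511.09377 — 3 statements merged into one kernel-verified Lean document; each statement's English description precedes it below -/
import Mathlib

section
/- Let G be a locally compact, second countable topological group, H < G a closed subgroup, and Γ < G a closed subgroup. Then the canonical projection map (H ∩ Γ)\H → Γ\G is proper if and only if the set ΓH is closed in G. -/
open scoped Pointwise

/-- The canonical projection `(H ∩ Γ)\H → Γ\G` (written here with left cosets:
`H ⧸ (Γ ∩ H) → G ⧸ Γ`, sending `h(Γ∩H)` to `hΓ`). -/
def canonicalProj {G : Type*} [Group G] (H Γ : Subgroup G) :
    H ⧸ Γ.subgroupOf H → G ⧸ Γ :=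
  Quotient.map' (fun h : H => (h : G))
    (fun a b hab => by
      rw [QuotientGroup.leftRel_apply] at hab ⊢
      simpa [Subgroup.mem_subgroupOf] using hab)

/-!
If `HΓ` is closed, the orbit `H • Γ` of the base point of `G ⧸ Γ` is closed, hence locally compact.
The σ-compact group `H` acts transitively on it, so by the open mapping theorem for such actions
the orbit map `H → H • Γ` is open. Therefore the continuous bijection `H ⧸ (H ∩ Γ) → H • Γ` is a
homeomorphism, and the projection is a closed embedding, in particular proper. Conversely a proper
map into a Hausdorff space has closed range, and the preimage of that range in `G` is `HΓ`.
-/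

open MulAction Topology Set

section OrbitMap

variable {H Y : Type*} [Group H] [TopologicalSpace H] [TopologicalSpace Y] [MulAction H Y]
  [ContinuousSMul H Y]

instance MulAction.orbit.continuousSMul (x : Y) : ContinuousSMul H (orbit H x) :=
  IsInducing.subtypeVal.continuousSMul continuous_id rfl

theorem MulAction.isOpenQuotientMap_orbitMap_of_sigmaCompact [IsTopologicalGroup H]
    [SigmaCompactSpace H] [T2Space Y] [LocallyCompactSpace Y] {x : Y}
    (hx : IsClosed (orbit H x)) :
    IsOpenQuotientMap (fun h : H => (⟨h • x, mem_orbit x h⟩ : orbit H x)) := by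
  have : LocallyCompactSpace (orbit H x) := hx.isClosedEmbedding_subtypeVal.locallyCompactSpace
  refine ⟨?_, by fun_prop, isOpenMap_smul_of_sigmaCompact (⟨x, mem_orbit_self x⟩ : orbit H x)⟩
  rintro ⟨-, h, rfl⟩
  exact ⟨h, rfl⟩

end OrbitMap

section CanonicalProj

variable {G : Type*} [Group G] {H Γ : Subgroup G}

theorem smul_mk_one (h : H) : h • ((1 : G) : G ⧸ Γ) = ((h : G) : G ⧸ Γ) :=
  congrArg QuotientGroup.mk (mul_one (h : G))

theorem canonicalProj_injective : Function.Injective (canonicalProj H Γ) := by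
  rintro ⟨a⟩ ⟨b⟩ hab
  refine QuotientGroup.eq.2 (Subgroup.mem_subgroupOf.2 ?_)
  simpa using QuotientGroup.eq.1 hab

theorem orbit_one_eq_image_mk :
    orbit H ((1 : G) : G ⧸ Γ) = QuotientGroup.mk '' (H : Set G) := by
  ext x
  constructor
  · rintro ⟨h, rfl⟩
    exact ⟨h, h.2, (smul_mk_one h).symm⟩
  · rintro ⟨g, hg, rfl⟩
    exact ⟨⟨g, hg⟩, smul_mk_one _⟩

theorem range_canonicalProj : range (canonicalProj H Γ) = orbit H ((1 : G) : G ⧸ Γ) := by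
  rw [orbit_one_eq_image_mk]
  ext x
  constructor
  · rintro ⟨⟨h⟩, rfl⟩
    exact ⟨h, h.2, rfl⟩
  · rintro ⟨g, hg, rfl⟩
    exact ⟨(⟨g, hg⟩ : H), rfl⟩

variable [TopologicalSpace G]

theorem continuous_canonicalProj : Continuous (canonicalProj H Γ) :=
  (QuotientGroup.isQuotientMap_mk (Γ.subgroupOf H)).continuous_iff.2 <|
    QuotientGroup.continuous_mk.comp continuous_subtype_val

theorem isClosed_orbit_one_iff :
    IsClosed (orbit H ((1 : G) : G ⧸ Γ)) ↔ IsClosed ((H : Set G) * (Γ : Set G)) := by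
  rw [← (QuotientGroup.isQuotientMap_mk Γ).isClosed_preimage, orbit_one_eq_image_mk,
    QuotientGroup.preimage_image_mk_eq_mul]

variable [IsTopologicalGroup G]

theorem isClosedEmbedding_canonicalProj [LocallyCompactSpace G] [SigmaCompactSpace H]
    (hΓ : IsClosed (Γ : Set G)) (hHΓ : IsClosed ((H : Set G) * (Γ : Set G))) :
    IsClosedEmbedding (canonicalProj H Γ) := by
  have : ContinuousSMul H (G ⧸ Γ) := Subgroup.continuousSMul
  have hO : IsClosed (orbit H ((1 : G) : G ⧸ Γ)) := isClosed_orbit_one_iff.2 hHΓ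
  let e : H ⧸ Γ.subgroupOf H → orbit H ((1 : G) : G ⧸ Γ) :=
    codRestrict (canonicalProj H Γ) _ fun y => range_canonicalProj.subset (mem_range_self y)
  have he : IsOpenQuotientMap e := by
    refine .of_comp QuotientGroup.continuous_mk QuotientGroup.mk_surjective
      (continuous_canonicalProj.codRestrict _) ?_
    convert isOpenQuotientMap_orbitMap_of_sigmaCompact hO using 2 with h
    exact Subtype.ext (smul_mk_one h).symm
  have he_homeo : IsHomeomorph e :=
    ⟨he.continuous, he.isOpenMap, fun _ _ hab => canonicalProj_injective (congrArg Subtype.val hab),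
      he.surjective⟩
  exact hO.isClosedEmbedding_subtypeVal.comp he_homeo.isClosedEmbedding

end CanonicalProj

/-- Let `G` be a locally compact, second countable topological group,
`H < G` a closed subgroup, and `Γ < G` a closed subgroup. Then the canonical
projection `(H ∩ Γ)\H → Γ\G` is proper if and only if `ΓH` (here `HΓ`, in the
left-coset convention) is closed in `G`. -/
theorem stmt_0 {G : Type*} [Group G] [TopologicalSpace G] [IsTopologicalGroup G]
    [LocallyCompactSpace G] [SecondCountableTopology G]
    (H Γ : Subgroup G) (hH : IsClosed (H : Set G)) (hΓ : IsClosed (Γ : Set G)) :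
    IsProperMap (canonicalProj H Γ) ↔ IsClosed ((H : Set G) * (Γ : Set G)) := by
  refine ⟨fun hp => ?_, fun hHΓ => ?_⟩
  · rw [← isClosed_orbit_one_iff, ← range_canonicalProj]
    exact hp.isClosedMap.isClosed_range
  · have : SecondCountableTopology H := IsEmbedding.subtypeVal.secondCountableTopology
    have : LocallyCompactSpace H := hH.isClosedEmbedding_subtypeVal.locallyCompactSpace
    exact (isClosedEmbedding_canonicalProj hΓ hHΓ).isProperMap
end

section
/- Let G be a rank-one connected simple Lie group with Bruhat decomposition G = P ∪ PwP, where P = MAN is a minimal parabolic subgroup, N its unipotent radical, and w a Weyl element with wPw⁻¹ equal to the opposite parabolic P⁺, and assume wPw⁻¹ ∩ P = MA contains no nontrivial unipotent elements. Let V < N be a nontrivial subgroup. If g ∈ G satisfies gVg⁻¹ ∩ V ≠ {e}, then g ∈ P. -/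
/-- Let `G` be a rank-one group with Bruhat decomposition
`G = P ∪ PwP`, where `P` is a minimal parabolic with unipotent radical `N`,
`w` a Weyl element, and `wPw⁻¹ ∩ P` contains no nontrivial unipotent element.
Let `V < N` be a nontrivial subgroup. If `g ∈ G` satisfies
`gVg⁻¹ ∩ V ≠ {e}`, then `g ∈ P`. -/
theorem stmt_6 {G : Type*} [Group G] (P N V : Subgroup G) (w : G)
    (unip : G → Prop)
    (hVN : V ≤ N) (hNP : N ≤ P) (hVnt : V ≠ ⊥)
    (hVunip : ∀ v ∈ V, v ≠ 1 → unip v)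
    (hconj : ∀ (g x : G), unip x → unip (g * x * g⁻¹))
    (hBruhat : ∀ g : G, g ∈ P ∨ ∃ p₁ ∈ P, ∃ p₂ ∈ P, g = p₁ * w * p₂)
    (hMA : ∀ x : G, unip x → x ∈ P → w⁻¹ * x * w ∈ P → x = 1)
    (g : G) (v : G) (hvV : v ∈ V) (hv1 : v ≠ 1) (hgv : g⁻¹ * v * g ∈ V) :
    g ∈ P := by
  rcases hBruhat g with h | ⟨p₁, hp₁, p₂, hp₂, rfl⟩
  · exact h
  · exfalso
    have hvP : v ∈ P := hNP (hVN hvV)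
    have hx : p₁⁻¹ * v * p₁ ∈ P := P.mul_mem (P.mul_mem (P.inv_mem hp₁) hvP) hp₁
    have hxu : unip (p₁⁻¹ * v * p₁) := by
      have := hconj p₁⁻¹ v (hVunip v hvV hv1)
      simpa using this
    have hw : w⁻¹ * (p₁⁻¹ * v * p₁) * w =
        p₂ * ((p₁ * w * p₂)⁻¹ * v * (p₁ * w * p₂)) * p₂⁻¹ := by
      group
    have hwP : w⁻¹ * (p₁⁻¹ * v * p₁) * w ∈ P := by
      rw [hw]
      exact P.mul_mem (P.mul_mem hp₂ (hNP (hVN hgv))) (P.inv_mem hp₂)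
    have := hMA _ hxu hx hwP
    apply hv1
    have : v = p₁ * (p₁⁻¹ * v * p₁) * p₁⁻¹ := by group
    rw [this, ‹p₁⁻¹ * v * p₁ = 1›]
    group
end

section
/- Under the hypotheses of the rank-one Bruhat decomposition, the normalizer in G of any nontrivial subgroup V of the unipotent radical N of a minimal parabolic P is contained in P. -/
/-!
Write `g ∉ P` as `g = p₁ w p₂`. If `x ∈ P` is unipotent and `g x g⁻¹ ∈ P`, then
`y = (w p₂) x (w p₂)⁻¹ = p₁⁻¹ (g x g⁻¹) p₁` is a unipotent element of `P ∩ w P w⁻¹`, hence trivial,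
and so is `x`. A nontrivial `v ∈ V` is such an `x` for every `g` normalizing `V`.
-/

theorem Subgroup.mem_of_conj_mem_of_bruhat {G : Type*} [Group G] (P : Subgroup G) (w : G)
    (unip : G → Prop) (hconj : ∀ (g x : G), unip x → unip (g * x * g⁻¹))
    (hBruhat : ∀ g : G, g ∈ P ∨ ∃ p₁ ∈ P, ∃ p₂ ∈ P, g = p₁ * w * p₂)
    (hMA : ∀ x : G, unip x → x ∈ P → w⁻¹ * x * w ∈ P → x = 1)
    {g x : G} (hxu : unip x) (hx1 : x ≠ 1) (hxP : x ∈ P) (hgxP : g * x * g⁻¹ ∈ P) : g ∈ P := by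
  rcases hBruhat g with hg | ⟨p₁, hp₁, p₂, hp₂, rfl⟩
  · exact hg
  set y := w * p₂ * x * (w * p₂)⁻¹
  have hyP : y ∈ P := by
    have hy : y = p₁⁻¹ * (p₁ * w * p₂ * x * (p₁ * w * p₂)⁻¹) * p₁ := by simp only [y]; group
    rw [hy]
    exact P.mul_mem (P.mul_mem (P.inv_mem hp₁) hgxP) hp₁
  have hwyP : w⁻¹ * y * w ∈ P := by
    have hwy : w⁻¹ * y * w = p₂ * x * p₂⁻¹ := by simp only [y]; group
    rw [hwy]
    exact P.mul_mem (P.mul_mem hp₂ hxP) (P.inv_mem hp₂)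
  exact absurd (conj_eq_one_iff.mp (hMA y (hconj _ _ hxu) hyP hwyP)) hx1

/-- Under the hypotheses of the rank-one Bruhat decomposition
(`G = P ∪ PwP`, `N` the unipotent radical of the minimal parabolic `P`,
`wPw⁻¹ ∩ P` containing no nontrivial unipotent element), the normalizer in `G`
of any nontrivial subgroup `V` of `N` is contained in `P`. -/
theorem stmt_7 {G : Type*} [Group G] (P N V : Subgroup G) (w : G)
    (unip : G → Prop)
    (hVN : V ≤ N) (hNP : N ≤ P) (hVnt : V ≠ ⊥)
    (hVunip : ∀ v ∈ V, v ≠ 1 → unip v)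
    (hconj : ∀ (g x : G), unip x → unip (g * x * g⁻¹))
    (hBruhat : ∀ g : G, g ∈ P ∨ ∃ p₁ ∈ P, ∃ p₂ ∈ P, g = p₁ * w * p₂)
    (hMA : ∀ x : G, unip x → x ∈ P → w⁻¹ * x * w ∈ P → x = 1) :
    Subgroup.normalizer (V : Set G) ≤ P := by
  intro g hg
  obtain ⟨v, hvV, hv1⟩ := (V.bot_or_exists_ne_one).resolve_left hVnt
  have hVP : V ≤ P := hVN.trans hNP
  exact P.mem_of_conj_mem_of_bruhat w unip hconj hBruhat hMA (hVunip v hvV hv1) hv1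
    (hVP hvV) (hVP ((hg v).mp hvV))
end
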